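/- arXiv:2507.09235 — 2 statements merged into one kernel-verified Lean document; each statement's English description precedes it below -/
import Mathlib

section
/- Let m ≥ 3 be a natural number, let A be a finite set with a strict linear order <, and let B be a weakly (m−1)-wise balanced design over A. Then the independence number of Γ_{B,m} satisfies α(Γ_{B,m}) ≤ |A| + |B|. -/
open Finset

/-- `B` is a weakly `m`-wise balanced design over the finite set `A`:
every block is a nonempty subset of `A`, every point of `A` lies in at least
one block, and any `m` pairwise distinct points of `A` are contained together
in at most one block. -/
def IsWeaklyBalancedDesign {α : Type*} [DecidableEq α] (m : ℕ)
    (A : Finset α) (B : Finset (Finset α)) : Prop :=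
  (∀ C ∈ B, C ⊆ A) ∧
  (∀ C ∈ B, C.Nonempty) ∧
  (∀ x ∈ A, ∃ C ∈ B, x ∈ C) ∧
  (∀ S : Finset α, S ⊆ A → S.card = m → (B.filter fun C => S ⊆ C).card ≤ 1)

/-- The vertex set of `Γ_{B,m}`: all incidence pairs `(x, C)` with `x ∈ C ∈ B`. -/
def designVerts {α : Type*} [DecidableEq α] (B : Finset (Finset α)) :
    Finset (α × Finset α) :=
  B.biUnion fun C => C.image fun x => (x, C)

/-- The graph `Γ_{B,m}` on incidence pairs: `(x, C₁)` and `(y, C₂)` are adjacent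
iff `x < y`, `C₁ ≠ C₂` and `x ∈ C₂`, or symmetrically `y < x`, `C₂ ≠ C₁` and `y ∈ C₁`. -/
def designGraph {α : Type*} [inst : LinearOrder α] (B : Finset (Finset α)) :
    SimpleGraph (designVerts (α := α) B) where
  Adj u v :=
    (u.val.1 < v.val.1 ∧ u.val.2 ≠ v.val.2 ∧ u.val.1 ∈ v.val.2) ∨
    (v.val.1 < u.val.1 ∧ v.val.2 ≠ u.val.2 ∧ v.val.1 ∈ u.val.2)
  symm := ⟨fun u v h => by tauto⟩
  loopless := ⟨fun u h => by
    rcases h with ⟨h, _, _⟩ | ⟨h, _, _⟩ <;> exact lt_irrefl _ h⟩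

/-- The independence number of a graph: the largest size of an independent set of vertices. -/
noncomputable def indepNum {V : Type*} (G : SimpleGraph V) : ℕ :=
  sSup {n | ∃ s : Finset V, s.card = n ∧ ∀ x ∈ s, ∀ y ∈ s, ¬ G.Adj x y}

/-! Fix an independent set of incidence pairs and call a pair *top* if its point is maximal
among the pairs of the set sharing its block. A top pair is determined by its block. A non-top
pair is determined by its point: if `(x, C)` and `(x, D)` are in the set with `C ≠ D` and
`(x, D)` is not top, some pair `(y, D)` of the set has `x < y`, and as `x ∈ D` it is adjacent
to `(x, C)`. Hence the set has at most `|B|` top and at most `|A|` non-top pairs. -/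

section Incidences

variable {α : Type*} [LinearOrder α] {P : Finset (α × Finset α)}

def IsIncidenceIndep (P : Finset (α × Finset α)) : Prop :=
  ∀ p ∈ P, ∀ q ∈ P, p.1 < q.1 → p.2 ≠ q.2 → p.1 ∉ q.2

def IsTopInBlock (P : Finset (α × Finset α)) (p : α × Finset α) : Prop :=
  ∀ q ∈ P, q.2 = p.2 → q.1 ≤ p.1

lemma eq_of_isTopInBlock_of_snd_eq {p q : α × Finset α} (hp : p ∈ P) (hq : q ∈ P)
    (hpt : IsTopInBlock P p) (hqt : IsTopInBlock P q) (h : p.2 = q.2) : p = q :=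
  Prod.ext (le_antisymm (hqt p hp h) (hpt q hq h.symm)) h

lemma eq_of_not_isTopInBlock_of_fst_eq (hP : IsIncidenceIndep P)
    (hPmem : ∀ p ∈ P, p.1 ∈ p.2) {p q : α × Finset α} (hp : p ∈ P) (hq : q ∈ P)
    (hqt : ¬ IsTopInBlock P q) (h : p.1 = q.1) : p = q := by
  refine Prod.ext h (by_contra fun hne => ?_)
  obtain ⟨w, hw, hwq, hlt⟩ : ∃ w ∈ P, w.2 = q.2 ∧ q.1 < w.1 := by
    simpa [IsTopInBlock] using hqt
  exact hP p hp w hw (h ▸ hlt) (hwq ▸ hne) (hwq ▸ h ▸ hPmem q hq)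

theorem IsIncidenceIndep.card_le {A : Finset α} {B : Finset (Finset α)}
    (hP : IsIncidenceIndep P) (hPB : ∀ p ∈ P, p.2 ∈ B ∧ p.1 ∈ p.2) (hBA : ∀ C ∈ B, C ⊆ A) :
    P.card ≤ A.card + B.card := by
  classical
  rw [← card_filter_add_card_filter_not (IsTopInBlock P), add_comm A.card]
  gcongr ?_ + ?_
  · refine card_le_card_of_injOn Prod.snd (fun p hp => ?_) fun p hp q hq h => ?_
    · exact (hPB p (mem_filter.1 hp).1).1
    · simp only [coe_filter, Set.mem_ofPred_eq] at hp hq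
      exact eq_of_isTopInBlock_of_snd_eq hp.1 hq.1 hp.2 hq.2 h
  · refine card_le_card_of_injOn Prod.fst (fun p hp => ?_) fun p hp q hq h => ?_
    · obtain ⟨hpB, hpC⟩ := hPB p (mem_filter.1 hp).1
      exact hBA _ hpB hpC
    · simp only [coe_filter, Set.mem_ofPred_eq] at hp hq
      exact eq_of_not_isTopInBlock_of_fst_eq hP (fun p hp => (hPB p hp).2) hp.1 hq.1 hq.2 h

end Incidences

lemma mem_designVerts {α : Type*} [DecidableEq α] {B : Finset (Finset α)}
    {p : α × Finset α} : p ∈ designVerts B ↔ p.2 ∈ B ∧ p.1 ∈ p.2 := by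
  simp only [designVerts, mem_biUnion, mem_image]
  constructor
  · rintro ⟨C, hC, x, hx, rfl⟩
    exact ⟨hC, hx⟩
  · exact fun ⟨hC, hx⟩ => ⟨p.2, hC, p.1, hx, rfl⟩

theorem designGraph_indepNum_le_general {α : Type*} [LinearOrder α] (m : ℕ)
    (A : Finset α) (B : Finset (Finset α))
    (hB : IsWeaklyBalancedDesign (m - 1) A B) :
    indepNum (designGraph B) ≤ A.card + B.card := by
  refine csSup_le' ?_
  rintro _ ⟨s, rfl, hs⟩
  rw [← card_map (Function.Embedding.subtype _)]
  refine IsIncidenceIndep.card_le ?_ ?_ hB.1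
  · simp only [IsIncidenceIndep, mem_map, Function.Embedding.subtype_apply]
    rintro _ ⟨u, hu, rfl⟩ _ ⟨v, hv, rfl⟩ hlt hne hmem
    exact hs u hu v hv (Or.inl ⟨hlt, hne, hmem⟩)
  · simp only [mem_map, Function.Embedding.subtype_apply]
    rintro _ ⟨u, -, rfl⟩
    exact mem_designVerts.1 u.2

/-- Let `m ≥ 3`, let `A` be a finite set with a strict linear order and let `B` be a
weakly `(m-1)`-wise balanced design over `A`. Then `α(Γ_{B,m}) ≤ |A| + |B|`. -/
theorem designGraph_indepNum_le {α : Type*} [LinearOrder α] (m : ℕ) (hm : 3 ≤ m)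
    (A : Finset α) (B : Finset (Finset α))
    (hB : IsWeaklyBalancedDesign (m - 1) A B) :
    indepNum (designGraph B) ≤ A.card + B.card :=
  designGraph_indepNum_le_general m A B hB
end

section
/- Let m ≥ 3 be a natural number, let A be a nonempty finite set with a strict linear order <, let B be a weakly (m−1)-wise balanced design over A, and suppose |B| ≤ k·|A|^{1−ε} for some real k > 0 and 0 < ε < 1. Then (|A|^{ε}/k + |B|) / 2 ≤ α(Γ_{B,m}). -/
open Finset

/-
Write `α` for `α(Γ_{B,m})`. The incidences of a single block are pairwise non-adjacent, so
every block has at most `α` points; choosing in each block its least point gives `|B|` pairwise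
non-adjacent vertices, so `|B| ≤ α`. Since the blocks cover `A`, the first bound gives
`|A| ≤ |B|·α ≤ k|A|^(1-ε)·α`, i.e. `|A|^ε/k ≤ α`; averaging with `|B| ≤ α` finishes.
-/

lemma mem_designVerts_s8 {α : Type*} [DecidableEq α] {B : Finset (Finset α)}
    {x : α} {C : Finset α} (hC : C ∈ B) (hx : x ∈ C) : (x, C) ∈ designVerts B :=
  mem_biUnion.2 ⟨C, hC, mem_image_of_mem _ hx⟩

lemma le_indepNum {V : Type*} [Fintype V] (G : SimpleGraph V) (s : Finset V)
    (hs : ∀ x ∈ s, ∀ y ∈ s, ¬ G.Adj x y) : s.card ≤ indepNum G := by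
  refine le_csSup ⟨Fintype.card V, ?_⟩ ⟨s, rfl, hs⟩
  rintro n ⟨t, rfl, -⟩
  exact card_le_univ t

lemma card_le_indepNum_of_injective {ι V : Type*} [Fintype ι] [Fintype V]
    (G : SimpleGraph V) (f : ι → V) (hf : Function.Injective f)
    (hind : ∀ i j, ¬ G.Adj (f i) (f j)) : Fintype.card ι ≤ indepNum G := by
  classical
  rw [← card_univ, ← card_image_of_injective univ hf]
  refine le_indepNum G _ ?_
  simp only [mem_image, mem_univ, true_and, forall_exists_index, forall_apply_eq_imp_iff]
  exact hind

section designGraph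

variable {α : Type*} [LinearOrder α] {B : Finset (Finset α)}

lemma card_le_indepNum_designGraph_of_mem {C : Finset α} (hC : C ∈ B) :
    C.card ≤ indepNum (designGraph B) := by
  rw [← Fintype.card_coe C]
  refine card_le_indepNum_of_injective _ (fun x ↦ ⟨(x.1, C), mem_designVerts_s8 hC x.2⟩)
    (fun x y h ↦ Subtype.ext (congrArg (fun v : designVerts B ↦ v.1.1) h)) ?_
  rintro x y (⟨-, hne, -⟩ | ⟨-, hne, -⟩) <;> exact hne rfl

lemma card_le_indepNum_designGraph (hne : ∀ C ∈ B, C.Nonempty) :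
    B.card ≤ indepNum (designGraph B) := by
  rw [← Fintype.card_coe B]
  refine card_le_indepNum_of_injective _
    (fun C ↦ ⟨(C.1.min' (hne C.1 C.2), C.1), mem_designVerts_s8 C.2 (min'_mem _ _)⟩)
    (fun C D h ↦ Subtype.ext (congrArg (fun v : designVerts B ↦ v.1.2) h)) ?_
  rintro C D (⟨hlt, -, hmem⟩ | ⟨hlt, -, hmem⟩) <;> exact (min'_le _ _ hmem).not_gt hlt

lemma card_le_card_mul_indepNum_designGraph {A : Finset α} (hcov : ∀ x ∈ A, ∃ C ∈ B, x ∈ C) :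
    A.card ≤ B.card * indepNum (designGraph B) := by
  have hAB : A ⊆ B.biUnion id := fun x hx ↦ by
    obtain ⟨C, hC, hxC⟩ := hcov x hx
    exact mem_biUnion.2 ⟨C, hC, hxC⟩
  exact (card_le_card hAB).trans
    (card_biUnion_le_card_mul B id _ fun _ ↦ card_le_indepNum_designGraph_of_mem)

end designGraph

lemma rpow_div_le_of_le_mul {a b k n ε : ℝ} (ha : 0 < a) (hk : 0 < k) (hn : 0 ≤ n)
    (hb : b ≤ k * a ^ (1 - ε)) (hab : a ≤ b * n) : a ^ ε / k ≤ n := by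
  have hpos : 0 < a ^ (1 - ε) := Real.rpow_pos_of_pos ha _
  have hsplit : a ^ (1 - ε) * a ^ ε = a := by
    rw [← Real.rpow_add ha, sub_add_cancel, Real.rpow_one]
  rw [div_le_iff₀ hk]
  refine le_of_mul_le_mul_left ?_ hpos
  calc a ^ (1 - ε) * a ^ ε = a := hsplit
    _ ≤ b * n := hab
    _ ≤ k * a ^ (1 - ε) * n := mul_le_mul_of_nonneg_right hb hn
    _ = a ^ (1 - ε) * (n * k) := by ring

theorem designGraph_indepNum_ge_of_few_blocks_general {α : Type*} [LinearOrder α] (m : ℕ)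
    (A : Finset α) (hA : A.Nonempty) (B : Finset (Finset α))
    (hB : IsWeaklyBalancedDesign (m - 1) A B)
    (k ε : ℝ) (hk : 0 < k)
    (hcard : (B.card : ℝ) ≤ k * (A.card : ℝ) ^ (1 - ε)) :
    ((A.card : ℝ) ^ ε / k + (B.card : ℝ)) / 2 ≤ (indepNum (designGraph B) : ℝ) := by
  obtain ⟨-, hne, hcov, -⟩ := hB
  have hblocks : (B.card : ℝ) ≤ indepNum (designGraph B) := by
    exact_mod_cast card_le_indepNum_designGraph hne
  have hpoints : (A.card : ℝ) ≤ B.card * indepNum (designGraph B) := by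
    exact_mod_cast card_le_card_mul_indepNum_designGraph hcov
  have hApos : (0 : ℝ) < A.card := by exact_mod_cast hA.card_pos
  have hpower := rpow_div_le_of_le_mul hApos hk (Nat.cast_nonneg _) hcard hpoints
  linarith

/-- Let `m ≥ 3`, let `A` be a nonempty finite set with a strict linear order, let `B` be a
weakly `(m-1)`-wise balanced design over `A`, and suppose `|B| ≤ k·|A|^(1-ε)` for some real
`k > 0` and `0 < ε < 1`. Then `(|A|^ε/k + |B|)/2 ≤ α(Γ_{B,m})`. -/
theorem designGraph_indepNum_ge_of_few_blocks {α : Type*} [LinearOrder α] (m : ℕ)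
    (hm : 3 ≤ m) (A : Finset α) (hA : A.Nonempty) (B : Finset (Finset α))
    (hB : IsWeaklyBalancedDesign (m - 1) A B)
    (k ε : ℝ) (hk : 0 < k) (hε0 : 0 < ε) (hε1 : ε < 1)
    (hcard : (B.card : ℝ) ≤ k * (A.card : ℝ) ^ (1 - ε)) :
    ((A.card : ℝ) ^ ε / k + (B.card : ℝ)) / 2 ≤ (indepNum (designGraph B) : ℝ) :=
  designGraph_indepNum_ge_of_few_blocks_general m A hA B hB k ε hk hcard
end
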